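/- The subalgebra of End(Λ(E)) generated by the set {c(e) : e ∈ E} ∪ {ĉ(e) : e ∈ E} is all of End(Λ(E)). -/

import Mathlib

/-!
Let `E` be a finite-dimensional real inner product space. The subalgebra of `End(Λ(E))`
generated by `{c(e) : e ∈ E} ∪ {ĉ(e) : e ∈ E}` is all of `End(Λ(E))`.
-/

variable {E : Type*} [NormedAddCommGroup E] [InnerProductSpace ℝ E] [FiniteDimensional ℝ E]

/-- Left exterior multiplication by `e` on `Λ(E)`. -/
noncomputable def extOp (e : E) : Module.End ℝ (ExteriorAlgebra ℝ E) :=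
  LinearMap.mulLeft ℝ (ExteriorAlgebra.ι ℝ e)

/-- Interior product (contraction) with `e`, i.e. contraction against the covector `⟪e, ·⟫`. -/
noncomputable def intOp (e : E) : Module.End ℝ (ExteriorAlgebra ℝ E) :=
  CliffordAlgebra.contractLeft (Q := (0 : QuadraticForm ℝ E)) ((innerSL ℝ e).toLinearMap)

/-- The Clifford action `c(e) = ext(e) - ι(e)`. -/
noncomputable def cOp (e : E) : Module.End ℝ (ExteriorAlgebra ℝ E) := extOp e - intOp e

/-- The Clifford action `ĉ(e) = ext(e) + ι(e)`. -/
noncomputable def hcOp (e : E) : Module.End ℝ (ExteriorAlgebra ℝ E) := extOp e + intOp e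

section Aux

lemma extOp_apply (e : E) (x : ExteriorAlgebra ℝ E) : extOp e x = ExteriorAlgebra.ι ℝ e * x := rfl

lemma intOp_ι_mul (e m : E) (x : ExteriorAlgebra ℝ E) :
    intOp e (ExteriorAlgebra.ι ℝ m * x) = (inner ℝ e m : ℝ) • x - ExteriorAlgebra.ι ℝ m * intOp e x := by
  have h := CliffordAlgebra.contractLeft_ι_mul (Q := (0 : QuadraticForm ℝ E))
    (d := (innerSL ℝ e).toLinearMap) m x
  simpa [intOp] using h

@[simp] lemma intOp_one (e : E) : intOp e (1 : ExteriorAlgebra ℝ E) = 0 :=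
  CliffordAlgebra.contractLeft_one _ _

noncomputable def eps : ExteriorAlgebra ℝ E →ₐ[ℝ] ℝ := ExteriorAlgebra.algebraMapInv

@[simp] lemma eps_ι (m : E) : eps (ExteriorAlgebra.ι ℝ m) = 0 := by
  simp [eps, ExteriorAlgebra.algebraMapInv]

@[simp] lemma eps_algebraMap (r : ℝ) : eps (algebraMap ℝ (ExteriorAlgebra ℝ E) r) = r :=
  ExteriorAlgebra.algebraMap_leftInverse E r

lemma ι_anticomm (e f : E) :
    ExteriorAlgebra.ι ℝ e * ExteriorAlgebra.ι ℝ f = -(ExteriorAlgebra.ι ℝ f * ExteriorAlgebra.ι ℝ e) := by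
  have h := CliffordAlgebra.ι_mul_ι_add_swap (Q := (0 : QuadraticForm ℝ E)) e f
  exact eq_neg_of_add_eq_zero_left (by simpa [QuadraticMap.polar] using h)

lemma intOp_mul_extOp (e f : E) :
    intOp e * extOp f
      = (inner ℝ e f : ℝ) • (1 : Module.End ℝ (ExteriorAlgebra ℝ E)) - extOp f * intOp e := by
  refine LinearMap.ext fun x => ?_
  simp [Module.End.mul_apply, extOp, LinearMap.mulLeft_apply, intOp_ι_mul, LinearMap.sub_apply,
    LinearMap.smul_apply, Module.End.one_apply]

lemma extOp_mul_extOp (e f : E) : extOp e * extOp f = -(extOp f * extOp e) := by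
  refine LinearMap.ext fun x => ?_
  simp only [Module.End.mul_apply, extOp, LinearMap.mulLeft_apply, LinearMap.neg_apply, ← mul_assoc]
  rw [ι_anticomm e f, neg_mul]

lemma extOp_sq (e : E) : extOp e * extOp e = 0 := by
  refine LinearMap.ext fun x => ?_
  simp [Module.End.mul_apply, extOp, LinearMap.mulLeft_apply, ← mul_assoc, ExteriorAlgebra.ι_sq_zero]

end Aux
set_option linter.unusedSectionVars false
set_option linter.unnecessarySimpa false
section Basis

set_option linter.unusedSectionVars false

variable {n : ℕ} (b : OrthonormalBasis (Fin n) ℝ E)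

lemma inner_bb (i j : Fin n) : (inner ℝ (b i) (b j) : ℝ) = if i = j then 1 else 0 :=
  orthonormal_iff_ite.mp b.orthonormal i j

/-- wedge monomial indexed by a list -/
noncomputable def wl : List (Fin n) → ExteriorAlgebra ℝ E
  | [] => 1
  | i :: l => ExteriorAlgebra.ι ℝ (b i) * wl l

/-- iterated contraction indexed by a list -/
noncomputable def Dl : List (Fin n) → Module.End ℝ (ExteriorAlgebra ℝ E)
  | [] => 1
  | i :: l => Dl l * intOp (b i)

lemma Dl_apply_cons (i : Fin n) (l : List (Fin n)) (x : ExteriorAlgebra ℝ E) :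
    Dl b (i :: l) x = Dl b l (intOp (b i) x) := rfl

lemma intOp_wl_of_not_mem (i : Fin n) (u : List (Fin n)) (h : i ∉ u) :
    intOp (b i) (wl b u) = 0 := by
  induction u with
  | nil => simp [wl]
  | cons j u ih =>
    have hij : i ≠ j := fun hh => h (hh ▸ List.mem_cons_self)
    rw [wl, intOp_ι_mul, inner_bb, if_neg hij, ih (fun hh => h (List.mem_cons_of_mem _ hh))]
    simp

lemma eps_Dl_ι_mul (l : List (Fin n)) (j : Fin n) (hj : j ∉ l) (y : ExteriorAlgebra ℝ E) :
    eps (Dl b l (ExteriorAlgebra.ι ℝ (b j) * y)) = 0 := by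
  induction l generalizing y with
  | nil => simp [Dl, eps_ι]
  | cons i l ih =>
    have hij : i ≠ j := fun hh => hj (hh ▸ List.mem_cons_self)
    rw [Dl_apply_cons, intOp_ι_mul, inner_bb, if_neg hij]
    rw [zero_smul, zero_sub, map_neg, map_neg]
    rw [ih (fun hh => hj (List.mem_cons_of_mem _ hh))]
    simp

lemma eps_Dl_wl (l u : List (Fin n)) (hl : l.Pairwise (· < ·)) (hu : u.Pairwise (· < ·)) :
    eps (Dl b l (wl b u)) = if l = u then 1 else 0 := by
  induction l generalizing u with
  | nil =>
    cases u with
    | nil => simp [Dl, wl]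
    | cons j u' => simp [Dl, wl, eps_ι]
  | cons i l' ih =>
    cases u with
    | nil =>
      rw [Dl_apply_cons]
      simp [wl]
    | cons j u' =>
      have hl' : l'.Pairwise (· < ·) := hl.of_cons
      have hu' : u'.Pairwise (· < ·) := hu.of_cons
      rw [Dl_apply_cons, wl, intOp_ι_mul, inner_bb]
      by_cases hij : i = j
      · subst hij
        have hiu' : i ∉ u' := fun hh => lt_irrefl i ((List.pairwise_cons.mp hu).1 i hh)
        rw [if_pos rfl, intOp_wl_of_not_mem b i u' hiu']
        rw [mul_zero, sub_zero, one_smul, ih u' hl' hu']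
        simp
      · rw [if_neg hij, zero_smul, zero_sub, map_neg, map_neg]
        by_cases hiu : i ∈ u'
        · -- j < i, so j ∉ i :: l'
          have hji : j < i := (List.pairwise_cons.mp hu).1 i hiu
          have hjl : j ∉ l' := fun hh => lt_irrefl j (hji.trans ((List.pairwise_cons.mp hl).1 j hh))
          rw [eps_Dl_ι_mul b l' j hjl]
          rw [neg_zero, if_neg (fun hh => hij (by injection hh))]
        · rw [intOp_wl_of_not_mem b i u' hiu]
          simp only [mul_zero, map_zero, neg_zero]
          rw [if_neg (fun hh => hij (by injection hh))]

end Basis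
section Sorting
set_option linter.unusedSectionVars false
variable {n : ℕ} (b : OrthonormalBasis (Fin n) ℝ E)

lemma ι_mul_wl_sorted (s : List (Fin n)) (hs : s.Pairwise (· < ·)) (i : Fin n) :
    ∃ (c : ℝ) (t : List (Fin n)), t.Pairwise (· < ·) ∧ (∀ x ∈ t, x ∈ i :: s) ∧
      ExteriorAlgebra.ι ℝ (b i) * wl b s = c • wl b t := by
  induction s generalizing i with
  | nil =>
    exact ⟨1, [i], List.pairwise_singleton _ i, by simp, by rw [one_smul]; rfl⟩
  | cons j s' ih =>
    rcases lt_trichotomy i j with hij | hij | hij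
    · refine ⟨1, i :: j :: s', ?_, fun x hx => hx, by rw [one_smul]; rfl⟩
      refine List.pairwise_cons.mpr ⟨fun x hx => ?_, hs⟩
      rcases List.mem_cons.mp hx with h | h
      · exact h ▸ hij
      · exact hij.trans ((List.pairwise_cons.mp hs).1 x h)
    · subst hij
      refine ⟨0, [], List.Pairwise.nil, by simp, ?_⟩
      show ExteriorAlgebra.ι ℝ (b i) * (ExteriorAlgebra.ι ℝ (b i) * wl b s') = (0 : ℝ) • wl b []
      rw [← mul_assoc, ExteriorAlgebra.ι_sq_zero, zero_mul, zero_smul]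
    · obtain ⟨c, t, ht, htm, heq⟩ := ih (List.pairwise_cons.mp hs).2 i
      refine ⟨-c, j :: t, ?_, ?_, ?_⟩
      · refine List.pairwise_cons.mpr ⟨fun x hx => ?_, ht⟩
        rcases List.mem_cons.mp (htm x hx) with h | h
        · exact h ▸ hij
        · exact (List.pairwise_cons.mp hs).1 x h
      · intro x hx
        rcases List.mem_cons.mp hx with h | h
        · simp [h]
        · rcases List.mem_cons.mp (htm x h) with h' | h'
          · simp [h']
          · simp [List.mem_cons_of_mem, h']
      · show ExteriorAlgebra.ι ℝ (b i) * (ExteriorAlgebra.ι ℝ (b j) * wl b s')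
            = (-c) • (ExteriorAlgebra.ι ℝ (b j) * wl b t)
        rw [← mul_assoc, ι_anticomm (b i) (b j), neg_mul, mul_assoc, heq, mul_smul_comm, neg_smul]

lemma wl_eq_smul_sorted (l : List (Fin n)) :
    ∃ (c : ℝ) (s : List (Fin n)), s.Pairwise (· < ·) ∧ wl b l = c • wl b s := by
  induction l with
  | nil => exact ⟨1, [], List.Pairwise.nil, (one_smul _ _).symm⟩
  | cons i l ih =>
    obtain ⟨c, s, hs, heq⟩ := ih
    obtain ⟨c', t, ht, _, heq'⟩ := ι_mul_wl_sorted b s hs i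
    refine ⟨c * c', t, ht, ?_⟩
    show ExteriorAlgebra.ι ℝ (b i) * wl b l = _
    rw [heq, mul_smul_comm, heq', smul_smul]

lemma mem_span_wl (x : ExteriorAlgebra ℝ E) : x ∈ Submodule.span ℝ (Set.range (wl b)) := by
  induction x using CliffordAlgebra.left_induction with
  | algebraMap r =>
    have h1 : algebraMap ℝ (ExteriorAlgebra ℝ E) r = r • wl b [] := by
      show _ = r • (1 : ExteriorAlgebra ℝ E)
      rw [Algebra.algebraMap_eq_smul_one]
    rw [h1]
    exact Submodule.smul_mem _ _ (Submodule.subset_span ⟨[], rfl⟩)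
  | add x y hx hy => exact Submodule.add_mem _ hx hy
  | ι_mul x m hx =>
    induction hx using Submodule.span_induction with
    | mem y hy =>
      obtain ⟨u, rfl⟩ := hy
      have hm : (ExteriorAlgebra.ι ℝ (M := E)) m = ∑ i, b.repr m i • ExteriorAlgebra.ι ℝ (b i) := by
        conv_lhs => rw [← b.sum_repr m]
        rw [map_sum]
        simp
      rw [hm, Finset.sum_mul]
      refine Submodule.sum_mem _ fun i _ => ?_
      rw [smul_mul_assoc]
      exact Submodule.smul_mem _ _ (Submodule.subset_span ⟨i :: u, rfl⟩)
    | zero => simp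
    | add y z _ _ hy hz => rw [mul_add]; exact Submodule.add_mem _ hy hz
    | smul c y _ hy => rw [mul_smul_comm]; exact Submodule.smul_mem _ _ hy

lemma span_wl : Submodule.span ℝ (Set.range (wl b)) = ⊤ :=
  eq_top_iff.mpr fun x _ => mem_span_wl b x

end Sorting
section Projector
set_option linter.unusedSectionVars false
variable {n : ℕ} (b : OrthonormalBasis (Fin n) ℝ E)

noncomputable def Nop (i : Fin n) : Module.End ℝ (ExteriorAlgebra ℝ E) :=
  extOp (b i) * intOp (b i)

noncomputable def Pl (l : List (Fin n)) : Module.End ℝ (ExteriorAlgebra ℝ E) :=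
  (l.map (fun i => 1 - Nop b i)).prod

lemma Pl_nil : Pl b [] = 1 := rfl

lemma Pl_cons (i : Fin n) (l : List (Fin n)) : Pl b (i :: l) = (1 - Nop b i) * Pl b l := by
  simp [Pl]

lemma Nop_mul_extOp_of_ne {i j : Fin n} (h : i ≠ j) :
    Nop b i * extOp (b j) = extOp (b j) * Nop b i := by
  have h1 : intOp (b i) * extOp (b j) = -(extOp (b j) * intOp (b i)) := by
    rw [intOp_mul_extOp, inner_bb, if_neg h, zero_smul, zero_sub]
  calc extOp (b i) * intOp (b i) * extOp (b j)
      = extOp (b i) * (intOp (b i) * extOp (b j)) := by rw [mul_assoc]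
    _ = extOp (b i) * -(extOp (b j) * intOp (b i)) := by rw [h1]
    _ = -(extOp (b i) * extOp (b j)) * intOp (b i) := by
        refine LinearMap.ext fun x => ?_
        simp [Module.End.mul_apply]
    _ = extOp (b j) * extOp (b i) * intOp (b i) := by rw [← extOp_mul_extOp]
    _ = extOp (b j) * (extOp (b i) * intOp (b i)) := by rw [mul_assoc]

lemma one_sub_Nop_mul_extOp_self (j : Fin n) : (1 - Nop b j) * extOp (b j) = 0 := by
  have h1 : intOp (b j) * extOp (b j) = 1 - extOp (b j) * intOp (b j) := by
    rw [intOp_mul_extOp, inner_bb, if_pos rfl, one_smul, sub_right_injective.eq_iff.mpr rfl]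
  rw [sub_mul, one_mul, Nop, mul_assoc, h1, mul_sub, mul_one, ← mul_assoc, extOp_sq, zero_mul,
    sub_zero, sub_self]

lemma Pl_mul_extOp_of_not_mem {j : Fin n} {l : List (Fin n)} (h : j ∉ l) :
    Pl b l * extOp (b j) = extOp (b j) * Pl b l := by
  induction l with
  | nil => rw [Pl_nil, one_mul, mul_one]
  | cons i l ih =>
    have hij : i ≠ j := fun hh => h (hh ▸ List.mem_cons_self)
    have hN := Nop_mul_extOp_of_ne b hij
    have hcomm : (1 - Nop b i) * extOp (b j) = extOp (b j) * (1 - Nop b i) := by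
      rw [sub_mul, mul_sub, one_mul, mul_one, hN]
    rw [Pl_cons, mul_assoc, ih (fun hh => h (List.mem_cons_of_mem _ hh)), ← mul_assoc, hcomm,
      mul_assoc]

lemma Pl_mul_extOp_of_mem {j : Fin n} {l : List (Fin n)} (hnd : l.Nodup) (h : j ∈ l) :
    Pl b l * extOp (b j) = 0 := by
  induction l with
  | nil => simp at h
  | cons i l ih =>
    rcases List.mem_cons.mp h with h1 | h1
    · subst h1
      have hjl : j ∉ l := (List.nodup_cons.mp hnd).1
      rw [Pl_cons, mul_assoc, Pl_mul_extOp_of_not_mem b hjl, ← mul_assoc,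
        one_sub_Nop_mul_extOp_self, zero_mul]
    · rw [Pl_cons, mul_assoc, ih (List.nodup_cons.mp hnd).2 h1, mul_zero]

noncomputable def Pfull : Module.End ℝ (ExteriorAlgebra ℝ E) := Pl b (List.finRange n)

lemma Pfull_mul_extOp (m : E) : Pfull b * extOp m = 0 := by
  have hm : extOp m = ∑ i, b.repr m i • extOp (b i) := by
    refine LinearMap.ext fun x => ?_
    show ExteriorAlgebra.ι ℝ m * x = _
    conv_lhs => rw [← b.sum_repr m]
    rw [map_sum, Finset.sum_mul]
    simp [extOp, smul_mul_assoc]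
  rw [hm, Finset.mul_sum]
  refine Finset.sum_eq_zero fun i _ => ?_
  rw [mul_smul_comm, show Pfull b * extOp (b i) = 0 from
    Pl_mul_extOp_of_mem b (List.nodup_finRange n) (List.mem_finRange i), smul_zero]

lemma Pl_one (l : List (Fin n)) : Pl b l 1 = 1 := by
  induction l with
  | nil => rfl
  | cons i l ih =>
    rw [Pl_cons, Module.End.mul_apply, ih]
    show (1 : ExteriorAlgebra ℝ E) - Nop b i 1 = 1
    have : Nop b i 1 = 0 := by
      show extOp (b i) (intOp (b i) 1) = 0
      rw [intOp_one, map_zero]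
    rw [this, sub_zero]

noncomputable def P0 : Module.End ℝ (ExteriorAlgebra ℝ E) :=
  (Algebra.linearMap ℝ (ExteriorAlgebra ℝ E)).comp (eps (E := E)).toLinearMap

lemma P0_apply (x : ExteriorAlgebra ℝ E) : P0 x = algebraMap ℝ (ExteriorAlgebra ℝ E) (eps x) := rfl

lemma Pfull_eq_P0 : Pfull b = P0 := by
  refine LinearMap.ext fun x => ?_
  rw [P0_apply]
  induction x using CliffordAlgebra.left_induction with
  | algebraMap r =>
    rw [eps_algebraMap, Algebra.algebraMap_eq_smul_one, map_smul]
    rw [show (Pfull b) (1 : ExteriorAlgebra ℝ E) = 1 from Pl_one b _]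
  | add x y hx hy => rw [map_add, map_add, hx, hy, map_add]
  | ι_mul x m hx =>
    have h1 : Pfull b (ExteriorAlgebra.ι ℝ m * x) = (Pfull b * extOp m) x := rfl
    rw [h1, Pfull_mul_extOp, map_mul, eps_ι, zero_mul, map_zero]
    rfl

end Projector
section Resolution
set_option linter.unusedSectionVars false
variable {n : ℕ} (b : OrthonormalBasis (Fin n) ℝ E)

lemma claimC :
    (∑ S : Finset (Fin n),
        LinearMap.mulLeft ℝ (wl b (S.sort (· ≤ ·))) * P0 * Dl b (S.sort (· ≤ ·)))
      = (1 : Module.End ℝ (ExteriorAlgebra ℝ E)) := by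
  classical
  refine LinearMap.ext_on (span_wl b) ?_
  rintro x ⟨l, rfl⟩
  obtain ⟨c, s, hs, heq⟩ := wl_eq_smul_sorted b l
  have hnd : s.Nodup := hs.nodup
  have hsle : s.Pairwise (· ≤ ·) := hs.imp le_of_lt
  have hsort : (s.toFinset).sort (· ≤ ·) = s := (List.toFinset_sort _ hnd).mpr hsle
  have hterm : ∀ S : Finset (Fin n),
      (LinearMap.mulLeft ℝ (wl b (S.sort (· ≤ ·))) * P0 (E := E) * Dl b (S.sort (· ≤ ·)))
          (wl b l)
        = (if S = s.toFinset then c • wl b s else 0) := by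
    intro S
    have h1 : (LinearMap.mulLeft ℝ (wl b (S.sort (· ≤ ·))) * P0 (E := E) * Dl b (S.sort (· ≤ ·)))
          (wl b l)
        = eps (Dl b (S.sort (· ≤ ·)) (wl b l)) • wl b (S.sort (· ≤ ·)) := by
      show LinearMap.mulLeft ℝ _ (P0 (Dl b _ (wl b l))) = _
      rw [P0_apply, LinearMap.mulLeft_apply, ← Algebra.commutes, ← Algebra.smul_def]
    rw [h1, heq, map_smul, map_smul, eps_Dl_wl b _ s ((Finset.sortedLT_sort S).pairwise) hs]
    by_cases hS : S = s.toFinset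
    · subst hS
      rw [hsort, if_pos rfl, if_pos rfl]
      simp
    · have hne : S.sort (· ≤ ·) ≠ s := fun hh => by
        apply hS
        rw [← Finset.sort_toFinset S (· ≤ ·), hh]
      rw [if_neg hne, if_neg hS]
      simp
  rw [LinearMap.sum_apply, Finset.sum_congr rfl (fun S _ => hterm S),
    Finset.sum_ite_eq' Finset.univ (s.toFinset) (fun _ => c • wl b s)]
  rw [if_pos (Finset.mem_univ _), Module.End.one_apply, heq]

end Resolution
theorem adjoin_cOp_hcOp_eq_top :
    Algebra.adjoin ℝ
      (Set.range (cOp : E → Module.End ℝ (ExteriorAlgebra ℝ E)) ∪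
        Set.range (hcOp : E → Module.End ℝ (ExteriorAlgebra ℝ E))) = ⊤ := by
  classical
  set A := Algebra.adjoin ℝ
      (Set.range (cOp : E → Module.End ℝ (ExteriorAlgebra ℝ E)) ∪
        Set.range (hcOp : E → Module.End ℝ (ExteriorAlgebra ℝ E))) with hA
  rw [eq_top_iff]
  rintro f -
  have hc : ∀ e : E, cOp e ∈ A := fun e => Algebra.subset_adjoin (Or.inl ⟨e, rfl⟩)
  have hhc : ∀ e : E, hcOp e ∈ A := fun e => Algebra.subset_adjoin (Or.inr ⟨e, rfl⟩)
  have hext : ∀ e : E, extOp e ∈ A := by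
    intro e
    have h2 : extOp e = (2:ℝ)⁻¹ • (cOp e + hcOp e) := by
      rw [cOp, hcOp, show extOp e - intOp e + (extOp e + intOp e) = (2:ℝ) • extOp e by
        rw [two_smul]; abel, smul_smul]
      norm_num
    rw [h2]
    exact Subalgebra.smul_mem _ (add_mem (hc e) (hhc e)) _
  have hint : ∀ e : E, intOp e ∈ A := by
    intro e
    have h2 : intOp e = (2:ℝ)⁻¹ • (hcOp e - cOp e) := by
      rw [cOp, hcOp, show extOp e + intOp e - (extOp e - intOp e) = (2:ℝ) • intOp e by
        rw [two_smul]; abel, smul_smul]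
      norm_num
    rw [h2]
    exact Subalgebra.smul_mem _ (sub_mem (hhc e) (hc e)) _
  have hmulLeft : ∀ x : ExteriorAlgebra ℝ E, LinearMap.mulLeft ℝ x ∈ A := by
    intro x
    induction x using ExteriorAlgebra.induction with
    | algebraMap r =>
      have h3 : LinearMap.mulLeft ℝ (algebraMap ℝ (ExteriorAlgebra ℝ E) r)
          = algebraMap ℝ (Module.End ℝ (ExteriorAlgebra ℝ E)) r := by
        refine LinearMap.ext fun y => ?_
        rw [LinearMap.mulLeft_apply, Module.algebraMap_end_apply, ← Algebra.smul_def]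
      rw [h3]
      exact Subalgebra.algebraMap_mem _ _
    | ι m => exact hext m
    | mul x y hx hy =>
      have h3 : LinearMap.mulLeft ℝ (x * y)
          = LinearMap.mulLeft ℝ x * LinearMap.mulLeft ℝ y := by
        refine LinearMap.ext fun z => ?_
        simp [Module.End.mul_apply, mul_assoc]
      rw [h3]
      exact mul_mem hx hy
    | add x y hx hy =>
      have h3 : LinearMap.mulLeft ℝ (x + y)
          = LinearMap.mulLeft ℝ x + LinearMap.mulLeft ℝ y := by
        refine LinearMap.ext fun z => ?_
        simp [add_mul]
      rw [h3]
      exact add_mem hx hy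
  set b : OrthonormalBasis (Fin (Module.finrank ℝ E)) ℝ E := stdOrthonormalBasis ℝ E with hb
  have hD : ∀ l : List (Fin (Module.finrank ℝ E)), Dl b l ∈ A := by
    intro l
    induction l with
    | nil => exact one_mem A
    | cons i l ih => exact mul_mem ih (hint (b i))
  have hPl : ∀ l : List (Fin (Module.finrank ℝ E)), Pl b l ∈ A := by
    intro l
    induction l with
    | nil => exact one_mem A
    | cons i l ih =>
      rw [Pl_cons]
      exact mul_mem (sub_mem (one_mem A) (mul_mem (hext (b i)) (hint (b i)))) ih
  have hP0 : (P0 : Module.End ℝ (ExteriorAlgebra ℝ E)) ∈ A := by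
    rw [← Pfull_eq_P0 b]
    exact hPl _
  have hPgP : ∀ g : Module.End ℝ (ExteriorAlgebra ℝ E),
      P0 * g * P0 = eps (g 1) • P0 (E := E) := by
    intro g
    refine LinearMap.ext fun x => ?_
    simp only [Module.End.mul_apply, LinearMap.smul_apply, P0_apply,
      Algebra.algebraMap_eq_smul_one, map_smul, smul_smul]
    rw [mul_comm]
  have hsand : ∀ (a d a' d' g : Module.End ℝ (ExteriorAlgebra ℝ E)),
      (a * P0 * d) * g * (a' * P0 * d') = eps ((d * g * a') 1) • (a * P0 * d') := by
    intro a d a' d' g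
    have h := hPgP (d * g * a')
    calc (a * P0 * d) * g * (a' * P0 * d') = a * (P0 * (d * g * a') * P0) * d' := by
          noncomm_ring
      _ = a * (eps ((d * g * a') 1) • P0) * d' := by rw [h]
      _ = eps ((d * g * a') 1) • (a * P0 * d') := by
          rw [mul_smul_comm, smul_mul_assoc]
  have hC := claimC b
  have hf : f = ∑ S : Finset (Fin (Module.finrank ℝ E)), ∑ T : Finset (Fin (Module.finrank ℝ E)),
      eps ((Dl b (S.sort (· ≤ ·)) * f * LinearMap.mulLeft ℝ (wl b (T.sort (· ≤ ·)))) 1) •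
        (LinearMap.mulLeft ℝ (wl b (S.sort (· ≤ ·))) * P0 * Dl b (T.sort (· ≤ ·))) := by
    calc f = (∑ S : Finset (Fin (Module.finrank ℝ E)),
            LinearMap.mulLeft ℝ (wl b (S.sort (· ≤ ·))) * P0 * Dl b (S.sort (· ≤ ·))) * f *
          (∑ T : Finset (Fin (Module.finrank ℝ E)),
            LinearMap.mulLeft ℝ (wl b (T.sort (· ≤ ·))) * P0 * Dl b (T.sort (· ≤ ·))) := by
          rw [hC, one_mul, mul_one]
      _ = ∑ S : Finset (Fin (Module.finrank ℝ E)), ∑ T : Finset (Fin (Module.finrank ℝ E)),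
          (LinearMap.mulLeft ℝ (wl b (S.sort (· ≤ ·))) * P0 * Dl b (S.sort (· ≤ ·))) * f *
            (LinearMap.mulLeft ℝ (wl b (T.sort (· ≤ ·))) * P0 * Dl b (T.sort (· ≤ ·))) := by
          rw [Finset.sum_mul, Finset.sum_mul]
          exact Finset.sum_congr rfl fun S _ => by rw [Finset.mul_sum]
      _ = _ := Finset.sum_congr rfl fun S _ => Finset.sum_congr rfl fun T _ => hsand _ _ _ _ _
  rw [hf]
  exact Subalgebra.sum_mem _ fun S _ => Subalgebra.sum_mem _ fun T _ =>
    Subalgebra.smul_mem _ (mul_mem (mul_mem (hmulLeft _) hP0) (hD _)) _
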